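/- arXiv:1103.3442 — 4 statements merged into one kernel-verified Lean document; each statement's English description precedes it below -/
import Mathlib

section
/- For every p > 0, as A → 0⁺, I(A) ~ (2B/3)·A^{−3/(2p)}; that is, lim_{A→0⁺} A^{3/(2p)} I(A) = 2B/3, where B = Σ_{m=1}^∞ m^{−3} (so 1.2020 < B < 1.2022). -/
/-!
With `x = A^(-1/(2p))` the condition `A a_ν² ≤ 1` reads `(j+1)(l+1) ≤ x`, so `I(A)` is the sum of
`(m+n-1)²` over the lattice points `m, n ≥ 1` under the hyperbola `mn ≤ x`. Since
`(m+n-1)² = m² + n² + O(mn)` and the region is symmetric in `m ↔ n`, `I(A) = 2 ∑ n² + O(∑ mn)`.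
Summed row by row, the `m`-th row of `∑ n²` is `~ (x/m)³/3` and bounded by `x³/m³`, so dominated
convergence gives `∑ n² ~ (B/3) x³`; the rows of `∑ mn` are bounded by `x³/m²` and are `o(x³)`.
The symmetry is essential: the rows of `∑ m²` admit no summable bound.
-/

open Filter Topology

/-- The index set `Γ = {(j,l) : j,l ∈ ℤ₊}`. -/
abbrev Idx : Type := ℕ × ℕ

noncomputable section

/-- The sequence `a_ν = ((j+1)(l+1))^p` for `ν = (j,l)`. -/
def aT (p : ℝ) (ν : Idx) : ℝ := (((ν.1 : ℝ) + 1) * ((ν.2 : ℝ) + 1)) ^ p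

/-- The sequence `σ_ν = (j+l+1)^{1/2}` for `ν = (j,l)`. -/
def sigT (ν : Idx) : ℝ := ((ν.1 : ℝ) + (ν.2 : ℝ) + 1) ^ ((1 : ℝ) / 2)

/-- The constant `B = Σ_{m=1}^∞ m^{−3}`. -/
def Bsum : ℝ := ∑' m : ℕ, 1 / ((m : ℝ) + 1) ^ 3

/-- `I(A) = Σ_{ν ∈ Γ : A a_ν² ≤ 1} σ_ν⁴ = Σ_{(m,n) : (mn)^{2p} ≤ A⁻¹} (m+n−1)²`. -/
def Ifun (p A : ℝ) : ℝ :=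
  ∑' ν : Idx, if A * aT p ν ^ 2 ≤ 1 then sigT ν ^ 4 else 0

end

open Finset

theorem summable_one_div_nat_add_one_pow {k : ℕ} (hk : 1 < k) :
    Summable (fun m : ℕ => 1 / ((m : ℝ) + 1) ^ k) := by
  have := (summable_nat_add_iff 1).2 (Real.summable_one_div_nat_pow.2 hk)
  exact_mod_cast this

theorem tendsto_natFloor_div_div {r : ℝ} (hr : 0 < r) :
    Tendsto (fun x => (⌊x / r⌋₊ : ℝ) / x) atTop (𝓝 r⁻¹) := by
  have := (tendsto_nat_floor_div_atTop.comp (tendsto_id.atTop_div_const hr)).mul_const r⁻¹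
  rw [one_mul] at this
  refine this.congr fun x => ?_
  simp only [Function.comp_apply, id]
  field_simp

theorem sum_range_add_one_pow_le (K k : ℕ) :
    ∑ n ∈ range K, ((n : ℝ) + 1) ^ k ≤ (K : ℝ) ^ (k + 1) :=
  calc ∑ n ∈ range K, ((n : ℝ) + 1) ^ k
      ≤ ∑ _n ∈ range K, (K : ℝ) ^ k := sum_le_sum fun n hn =>
        pow_le_pow_left₀ (by positivity) (by exact_mod_cast mem_range.1 hn) k
    _ = (K : ℝ) ^ (k + 1) := by simp [pow_succ']

theorem cube_div_three_le_sum_range_sq (K : ℕ) :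
    (K : ℝ) ^ 3 / 3 ≤ ∑ n ∈ range K, ((n : ℝ) + 1) ^ 2 := by
  induction K with
  | zero => simp
  | succ K ih =>
    rw [sum_range_succ]
    push_cast
    nlinarith [K.cast_nonneg (α := ℝ)]

theorem sum_range_sq_le_cube_div_three (K : ℕ) :
    ∑ n ∈ range K, ((n : ℝ) + 1) ^ 2 ≤ ((K : ℝ) + 1) ^ 3 / 3 := by
  induction K with
  | zero => simp
  | succ K ih =>
    rw [sum_range_succ]
    push_cast
    nlinarith [K.cast_nonneg (α := ℝ)]

theorem sum_range_floor_div_sq_le {r : ℝ} (hr : 0 < r) {x : ℝ} (hx : 0 ≤ x) :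
    ∑ n ∈ range ⌊x / r⌋₊, ((n : ℝ) + 1) ^ 2 ≤ (x / r) ^ 3 :=
  (sum_range_add_one_pow_le _ 2).trans
    (pow_le_pow_left₀ (by positivity) (Nat.floor_le (by positivity)) 3)

theorem tendsto_sum_range_floor_div_sq_div_cube {r : ℝ} (hr : 0 < r) :
    Tendsto (fun x => (∑ n ∈ range ⌊x / r⌋₊, ((n : ℝ) + 1) ^ 2) / x ^ 3) atTop
      (𝓝 (r⁻¹ ^ 3 / 3)) := by
  have hK := tendsto_natFloor_div_div hr
  have h_lower : Tendsto (fun x => ((⌊x / r⌋₊ : ℝ) / x) ^ 3 / 3) atTop (𝓝 (r⁻¹ ^ 3 / 3)) :=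
    (hK.pow 3).div_const 3
  have h_upper : Tendsto (fun x => ((⌊x / r⌋₊ : ℝ) / x + x⁻¹) ^ 3 / 3) atTop
      (𝓝 (r⁻¹ ^ 3 / 3)) := by
    simpa using ((hK.add tendsto_inv_atTop_zero).pow 3).div_const 3
  refine tendsto_of_tendsto_of_tendsto_of_le_of_le' h_lower h_upper ?_ ?_ <;>
    filter_upwards [eventually_gt_atTop 0] with x hx
  · calc ((⌊x / r⌋₊ : ℝ) / x) ^ 3 / 3 = ((⌊x / r⌋₊ : ℝ) ^ 3 / 3) / x ^ 3 := by ring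
      _ ≤ _ := by gcongr; exact cube_div_three_le_sum_range_sq _
  · calc (∑ n ∈ range ⌊x / r⌋₊, ((n : ℝ) + 1) ^ 2) / x ^ 3
        ≤ (((⌊x / r⌋₊ : ℝ) + 1) ^ 3 / 3) / x ^ 3 := by
          gcongr; exact sum_range_sq_le_cube_div_three _
      _ = ((⌊x / r⌋₊ : ℝ) / x + x⁻¹) ^ 3 / 3 := by field_simp

theorem norm_sum_range_floor_div_sq_div_cube_le {r : ℝ} (hr : 0 < r) {x : ℝ} (hx : 0 < x) :
    ‖(∑ n ∈ range ⌊x / r⌋₊, ((n : ℝ) + 1) ^ 2) / x ^ 3‖ ≤ r⁻¹ ^ 3 := by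
  rw [Real.norm_of_nonneg (by positivity), div_le_iff₀ (by positivity), ← mul_pow,
    inv_mul_eq_div]
  exact sum_range_floor_div_sq_le hr hx.le

theorem tendsto_sum_range_floor_div_mul_div_cube {r : ℝ} (hr : 0 < r) :
    Tendsto (fun x => (∑ n ∈ range ⌊x / r⌋₊, r * ((n : ℝ) + 1)) / x ^ 3) atTop (𝓝 0) := by
  have h_lim : Tendsto (fun x => r * ((⌊x / r⌋₊ : ℝ) / x) ^ 2 * x⁻¹) atTop (𝓝 0) := by
    simpa using (((tendsto_natFloor_div_div hr).pow 2).const_mul r).mul tendsto_inv_atTop_zero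
  refine squeeze_zero' ?_ ?_ h_lim <;> filter_upwards [eventually_gt_atTop 0] with x hx
  · positivity
  · calc (∑ n ∈ range ⌊x / r⌋₊, r * ((n : ℝ) + 1)) / x ^ 3
        ≤ (r * (⌊x / r⌋₊ : ℝ) ^ 2) / x ^ 3 := by
          rw [← mul_sum]; gcongr; simpa using sum_range_add_one_pow_le ⌊x / r⌋₊ 1
      _ = r * ((⌊x / r⌋₊ : ℝ) / x) ^ 2 * x⁻¹ := by field_simp

theorem norm_sum_range_floor_div_mul_div_cube_le {r : ℝ} (hr : 0 < r) {x : ℝ} (hx : 0 < x) :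
    ‖(∑ n ∈ range ⌊x / r⌋₊, r * ((n : ℝ) + 1)) / x ^ 3‖ ≤ r⁻¹ ^ 2 := by
  have h_lin_le_sq :
      ∑ n ∈ range ⌊x / r⌋₊, ((n : ℝ) + 1) ≤ ∑ n ∈ range ⌊x / r⌋₊, ((n : ℝ) + 1) ^ 2 :=
    sum_le_sum fun n _ => by nlinarith [n.cast_nonneg (α := ℝ)]
  rw [Real.norm_of_nonneg (by positivity), div_le_iff₀ (by positivity), ← mul_sum]
  calc r * ∑ n ∈ range ⌊x / r⌋₊, ((n : ℝ) + 1) ≤ r * (x / r) ^ 3 := by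
        gcongr; exact h_lin_le_sq.trans (sum_range_floor_div_sq_le hr hx.le)
    _ = r⁻¹ ^ 2 * x ^ 3 := by field_simp

noncomputable def hyperbolaRegion (x : ℝ) : Finset (ℕ × ℕ) :=
  {ν ∈ range ⌈x⌉₊ ×ˢ range ⌈x⌉₊ | ((ν.1 : ℝ) + 1) * (ν.2 + 1) ≤ x}

theorem mem_hyperbolaRegion {x : ℝ} {ν : ℕ × ℕ} :
    ν ∈ hyperbolaRegion x ↔ ((ν.1 : ℝ) + 1) * (ν.2 + 1) ≤ x := by
  simp only [hyperbolaRegion, mem_filter, mem_product, mem_range, Nat.lt_ceil,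
    and_iff_right_iff_imp]
  intro h
  have h₁ : (0 : ℝ) ≤ ν.1 := ν.1.cast_nonneg
  have h₂ : (0 : ℝ) ≤ ν.2 := ν.2.cast_nonneg
  constructor <;> nlinarith

theorem sum_hyperbolaRegion_swap {M : Type*} [AddCommMonoid M] (x : ℝ) (f : ℕ × ℕ → M) :
    ∑ ν ∈ hyperbolaRegion x, f ν.swap = ∑ ν ∈ hyperbolaRegion x, f ν :=
  sum_equiv (Equiv.prodComm ℕ ℕ) (by simp [mem_hyperbolaRegion, mul_comm]) (by simp)

theorem lt_floor_div_iff_mul_le {x : ℝ} (m n : ℕ) :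
    n < ⌊x / ((m : ℝ) + 1)⌋₊ ↔ ((m : ℝ) + 1) * (n + 1) ≤ x := by
  rw [← Nat.add_one_le_iff, Nat.le_floor_iff' n.succ_ne_zero, mul_comm,
    ← le_div_iff₀ (by positivity)]
  push_cast
  rfl

theorem sum_hyperbolaRegion_eq_tsum {M : Type*} [AddCommMonoid M] [TopologicalSpace M] (x : ℝ)
    (f : ℕ → ℕ → M) :
    ∑ ν ∈ hyperbolaRegion x, f ν.1 ν.2 = ∑' m : ℕ, ∑ n ∈ range ⌊x / ((m : ℝ) + 1)⌋₊, f m n := by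
  have h_row (m : ℕ) : (range ⌈x⌉₊).filter (fun n : ℕ => ((m : ℝ) + 1) * (n + 1) ≤ x) =
      range ⌊x / ((m : ℝ) + 1)⌋₊ := by
    ext n
    simp only [mem_filter, mem_range, Nat.lt_ceil, lt_floor_div_iff_mul_le, and_iff_right_iff_imp]
    intro h
    have : (0 : ℝ) ≤ m := m.cast_nonneg
    nlinarith
  rw [tsum_eq_sum (s := range ⌈x⌉₊), hyperbolaRegion, sum_filter, sum_product]
  · exact sum_congr rfl fun m _ => by rw [← sum_filter, h_row]
  · intro m hm
    rw [← h_row, filter_eq_empty_iff.2, sum_empty]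
    intro n hn
    simp only [mem_range, Nat.lt_ceil, not_lt] at hm hn
    have : (0 : ℝ) ≤ n := n.cast_nonneg
    nlinarith

theorem tendsto_sum_hyperbolaRegion_div {f : ℕ → ℕ → ℝ} {φ : ℝ → ℝ} {g bound : ℕ → ℝ}
    (h_sum : Summable bound)
    (h_row : ∀ m : ℕ,
      Tendsto (fun x => (∑ n ∈ range ⌊x / ((m : ℝ) + 1)⌋₊, f m n) / φ x) atTop (𝓝 (g m)))
    (h_bound : ∀ᶠ x in atTop, ∀ m : ℕ,
      ‖(∑ n ∈ range ⌊x / ((m : ℝ) + 1)⌋₊, f m n) / φ x‖ ≤ bound m) :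
    Tendsto (fun x => (∑ ν ∈ hyperbolaRegion x, f ν.1 ν.2) / φ x) atTop (𝓝 (∑' m : ℕ, g m)) := by
  simp_rw [sum_hyperbolaRegion_eq_tsum, ← tsum_div_const]
  exact tendsto_tsum_of_dominated_convergence h_sum h_row h_bound

theorem tendsto_sum_hyperbolaRegion_sq_div_cube :
    Tendsto (fun x => (∑ ν ∈ hyperbolaRegion x, ((ν.2 : ℝ) + 1) ^ 2) / x ^ 3) atTop
      (𝓝 (Bsum / 3)) := by
  have := tendsto_sum_hyperbolaRegion_div (f := fun _ n => ((n : ℝ) + 1) ^ 2)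
    (summable_one_div_nat_add_one_pow (k := 3) (by norm_num))
    (fun m => tendsto_sum_range_floor_div_sq_div_cube (r := (m : ℝ) + 1) (by positivity))
    ((eventually_gt_atTop 0).mono fun x hx m =>
      (norm_sum_range_floor_div_sq_div_cube_le (by positivity) hx).trans_eq (by simp [inv_pow]))
  rw [tsum_div_const] at this
  simpa only [Bsum, one_div, inv_pow] using this

theorem tendsto_sum_hyperbolaRegion_mul_div_cube :
    Tendsto (fun x => (∑ ν ∈ hyperbolaRegion x, ((ν.1 : ℝ) + 1) * ((ν.2 : ℝ) + 1)) / x ^ 3)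
      atTop (𝓝 0) := by
  have := tendsto_sum_hyperbolaRegion_div (f := fun m n => ((m : ℝ) + 1) * ((n : ℝ) + 1))
    (summable_one_div_nat_add_one_pow (k := 2) (by norm_num))
    (fun m => tendsto_sum_range_floor_div_mul_div_cube (r := (m : ℝ) + 1) (by positivity))
    ((eventually_gt_atTop 0).mono fun x hx m =>
      (norm_sum_range_floor_div_mul_div_cube_le (by positivity) hx).trans_eq (by simp [inv_pow]))
  rwa [tsum_zero] at this

theorem tendsto_sum_hyperbolaRegion_add_sq_div_cube :
    Tendsto (fun x => (∑ ν ∈ hyperbolaRegion x, ((ν.1 : ℝ) + ν.2 + 1) ^ 2) / x ^ 3) atTop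
      (𝓝 (2 * Bsum / 3)) := by
  set S₁ : ℝ → ℝ := fun x => ∑ ν ∈ hyperbolaRegion x, ((ν.2 : ℝ) + 1) ^ 2
  set P : ℝ → ℝ := fun x => ∑ ν ∈ hyperbolaRegion x, ((ν.1 : ℝ) + 1) * ((ν.2 : ℝ) + 1)
  have h_err (x : ℝ) :
      |∑ ν ∈ hyperbolaRegion x, ((ν.1 : ℝ) + ν.2 + 1) ^ 2 - 2 * S₁ x| ≤ 2 * P x := by
    have h_symm :
        2 * S₁ x = ∑ ν ∈ hyperbolaRegion x, (((ν.1 : ℝ) + 1) ^ 2 + ((ν.2 : ℝ) + 1) ^ 2) := by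
      have h_swap : ∑ ν ∈ hyperbolaRegion x, ((ν.1 : ℝ) + 1) ^ 2 = S₁ x :=
        sum_hyperbolaRegion_swap x fun ν => ((ν.2 : ℝ) + 1) ^ 2
      rw [sum_add_distrib, h_swap]
      ring
    rw [h_symm, ← sum_sub_distrib, mul_sum]
    -- `(m+n-1)² - m² - n² = 2(m-1)(n-1) - 1` lies in `[-2mn, 2mn]`
    refine (abs_sum_le_sum_abs _ _).trans (sum_le_sum fun ν _ => abs_le.2 ⟨?_, ?_⟩) <;>
      nlinarith [ν.1.cast_nonneg (α := ℝ), ν.2.cast_nonneg (α := ℝ)]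
  have h_err_lim : Tendsto (fun x => (∑ ν ∈ hyperbolaRegion x, ((ν.1 : ℝ) + ν.2 + 1) ^ 2
      - 2 * S₁ x) / x ^ 3) atTop (𝓝 0) := by
    refine squeeze_zero_norm' ?_
      (by simpa using tendsto_sum_hyperbolaRegion_mul_div_cube.const_mul 2)
    filter_upwards [eventually_gt_atTop 0] with x hx
    rw [norm_div, Real.norm_eq_abs, Real.norm_of_nonneg (by positivity), mul_div_assoc']
    gcongr
    exact h_err x
  convert (tendsto_sum_hyperbolaRegion_sq_div_cube.const_mul 2).add h_err_lim using 2 <;> ring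

theorem tsum_one_div_nat_add_one_pow_three_tail_le {N : ℕ} (hN : 0 < N) :
    ∑' i : ℕ, 1 / (((i + N : ℕ) : ℝ) + 1) ^ 3 ≤ 1 / (2 * (N : ℝ) * (N + 1)) := by
  set h : ℕ → ℝ := fun n => 1 / (2 * (n : ℝ) * (n + 1))
  -- `1/(n+1)³ ≤ 1/(n(n+1)(n+2)) = h n - h (n+1)` for `n ≥ 1`
  have h_tele (i : ℕ) : 1 / (((i + N : ℕ) : ℝ) + 1) ^ 3 ≤ h (i + N) - h (i + 1 + N) := by
    have hn : (1 : ℝ) ≤ (i + N : ℕ) := by exact_mod_cast hN.trans_le (Nat.le_add_left N i)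
    have h_succ : h (i + 1 + N) = 1 / (2 * (((i + N : ℕ) : ℝ) + 1) * (((i + N : ℕ) : ℝ) + 2)) := by
      simp only [h]; push_cast; ring
    rw [h_succ, div_sub_div _ _ (by positivity) (by positivity),
      div_le_div_iff₀ (by positivity) (by positivity)]
    nlinarith
  refine Real.tsum_le_of_sum_range_le (fun _ => by positivity) fun n => ?_
  calc ∑ i ∈ range n, 1 / (((i + N : ℕ) : ℝ) + 1) ^ 3
      ≤ ∑ i ∈ range n, (h (i + N) - h (i + 1 + N)) := sum_le_sum fun i _ => h_tele i
    _ = h N - h (n + N) := by rw [sum_range_sub' (fun i => h (i + N))]; simp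
    _ ≤ h N := sub_le_self _ (by positivity)

theorem Bsum_bounds : (1.2020 : ℝ) < Bsum ∧ Bsum < (1.2022 : ℝ) := by
  have h_sum := summable_one_div_nat_add_one_pow (k := 3) (by norm_num)
  have h_head : (1.2020 : ℝ) < ∑ m ∈ range 100, 1 / ((m : ℝ) + 1) ^ 3 ∧
      ∑ m ∈ range 100, 1 / ((m : ℝ) + 1) ^ 3 < 1.2021 := by
    constructor <;> norm_num [sum_range_succ]
  have h_tail := tsum_one_div_nat_add_one_pow_three_tail_le (N := 100) (by norm_num)
  have h_split := h_sum.sum_add_tsum_nat_add 100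
  have h_tail_nonneg : 0 ≤ ∑' i : ℕ, 1 / (((i + 100 : ℕ) : ℝ) + 1) ^ 3 :=
    tsum_nonneg fun _ => by positivity
  have h_tail_small : 1 / (2 * ((100 : ℕ) : ℝ) * ((100 : ℕ) + 1)) < 0.0001 := by norm_num
  rw [Bsum, ← h_split]
  constructor <;> linarith [h_head.1, h_head.2]

theorem mul_aT_sq_le_one_iff {p A : ℝ} (hp : 0 < p) (hA : 0 < A) (ν : Idx) :
    A * aT p ν ^ 2 ≤ 1 ↔ ν ∈ hyperbolaRegion (A⁻¹ ^ (2 * p)⁻¹) := by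
  have ht : (0 : ℝ) ≤ ((ν.1 : ℝ) + 1) * ((ν.2 : ℝ) + 1) := by positivity
  rw [mem_hyperbolaRegion, Real.le_rpow_inv_iff_of_pos ht (by positivity) (by positivity),
    aT, ← Real.rpow_mul_natCast ht, ← le_inv_mul_iff₀ hA, mul_one, mul_comm p]
  norm_num

theorem sigT_pow_four (ν : Idx) : sigT ν ^ 4 = ((ν.1 : ℝ) + ν.2 + 1) ^ 2 := by
  rw [sigT, ← Real.rpow_mul_natCast (by positivity)]
  norm_num

theorem Ifun_eq_sum_hyperbolaRegion {p A : ℝ} (hp : 0 < p) (hA : 0 < A) :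
    Ifun p A = ∑ ν ∈ hyperbolaRegion (A⁻¹ ^ (2 * p)⁻¹), ((ν.1 : ℝ) + ν.2 + 1) ^ 2 := by
  rw [Ifun, tsum_eq_sum fun ν hν => if_neg (mt (mul_aT_sq_le_one_iff hp hA ν).1 hν)]
  exact sum_congr rfl fun ν hν => by
    rw [if_pos ((mul_aT_sq_le_one_iff hp hA ν).2 hν), sigT_pow_four]

/-- For every `p > 0`, `I(A) ~ (2B/3) A^{−3/(2p)}` as `A → 0⁺`, where
`B = Σ m^{−3}` (so `1.2020 < B < 1.2022`). -/
theorem Ifun_asymptotics (p : ℝ) (hp : 0 < p) :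
    Tendsto (fun A : ℝ => A ^ (3 / (2 * p)) * Ifun p A) (𝓝[>] (0 : ℝ))
      (𝓝 (2 * Bsum / 3)) ∧
    (1.2020 : ℝ) < Bsum ∧ Bsum < (1.2022 : ℝ) := by
  refine ⟨?_, Bsum_bounds⟩
  have hx : Tendsto (fun A : ℝ => A⁻¹ ^ (2 * p)⁻¹) (𝓝[>] 0) atTop :=
    (tendsto_rpow_atTop (by positivity)).comp tendsto_inv_nhdsGT_zero
  refine (tendsto_sum_hyperbolaRegion_add_sq_div_cube.comp hx).congr' ?_
  filter_upwards [self_mem_nhdsWithin] with A (hA : 0 < A)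
  have h_cube : (A⁻¹ ^ (2 * p)⁻¹) ^ 3 = (A ^ (3 / (2 * p)))⁻¹ := by
    rw [← Real.rpow_mul_natCast (by positivity), Real.inv_rpow hA.le]
    congr 2
    push_cast
    field_simp
  rw [Function.comp_apply, h_cube, div_inv_eq_mul, mul_comm, Ifun_eq_sum_hyperbolaRegion hp hA]
end

section
/- For every p > 0, as A → 0⁺, J₂(A) ~ (4Bp/((4p+3)(2p+3)))·A^{−3/(2p)}; that is, lim_{A→0⁺} A^{3/(2p)} J₂(A) = 4Bp/((4p+3)(2p+3)), where B = Σ_{m=1}^∞ m^{−3}. -/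
/-!
Put `s = A ^ (1 / (2 p))`, so that `A ^ (3 / (2 p)) J₂(A) = s³ ∑ (j + l + 1)² φ(s (j+1) (l+1))`
with `φ x = x ^ (2p) (1 - x ^ (2p))₊`, and split `(j + l + 1)² = (j+1)² + (l+1)² + (2 j l - 1)`.
By symmetry the first two parts contribute equally, `∑_j G(s (j+1)) / (j+1)³` each, where
`G h = h ∑_{d ≥ 1} (h d) ^ (2p+2) (1 - (h d) ^ (2p))₊` is a Riemann sum of
`∫₀¹ x ^ (2p+2) (1 - x ^ (2p)) dx = 1/(2p+3) - 1/(4p+3)`. As `0 ≤ G ≤ 1`, dominated convergence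
gives the limit `2 B (1/(2p+3) - 1/(4p+3))`. The contribution of `2 j l - 1` is at most
`2 h G'(h) / (j+1)²` at `h = s (j+1)`, with `G'` the analogous Riemann sum for the exponent
`2p+1`; this tends to `0` and is dominated by `2 / (j+1)²`, so it vanishes in the limit.
-/

open Filter Topology

noncomputable section

/-- `J₂(A) = A Σ_{ν∈Γ} a_ν² σ_ν⁴ (1 − A a_ν²)₊`. -/
def J2fun (p A : ℝ) : ℝ :=
  A * ∑' ν : Idx, aT p ν ^ 2 * sigT ν ^ 4 * max (1 - A * aT p ν ^ 2) 0

open Finset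

def powCutoff (r x : ℝ) : ℝ := max (1 - x ^ r) 0

lemma powCutoff_nonneg (r x : ℝ) : 0 ≤ powCutoff r x := le_max_right _ _

lemma powCutoff_eq_zero {r x : ℝ} (hr : 0 ≤ r) (hx : 1 ≤ x) : powCutoff r x = 0 :=
  max_eq_right (by linarith [Real.one_le_rpow hx hr])

lemma powCutoff_eq {r x : ℝ} (hr : 0 ≤ r) (hx₀ : 0 ≤ x) (hx₁ : x ≤ 1) : powCutoff r x = 1 - x ^ r :=
  max_eq_left (by linarith [Real.rpow_le_one hx₀ hx₁ hr])

lemma mul_succ_le_one_iff {h : ℝ} (hh : 0 < h) (d : ℕ) : h * (d + 1) ≤ 1 ↔ d < ⌊h⁻¹⌋₊ := by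
  rw [Nat.lt_iff_add_one_le, Nat.le_floor_iff (inv_nonneg.2 hh.le), ← one_div,
    le_div_iff₀ hh, mul_comm]
  push_cast
  rfl

lemma powCutoff_mul_succ_eq_zero {r h : ℝ} (hr : 0 ≤ r) (hh : 0 < h) {d : ℕ}
    (hd : d ∉ range ⌊h⁻¹⌋₊) : powCutoff r (h * (d + 1)) = 0 := by
  rw [mem_range, ← mul_succ_le_one_iff hh, not_le] at hd
  exact powCutoff_eq_zero hr hd.le

lemma summable_mul_powCutoff (g : ℕ → ℝ) {r h : ℝ} (hr : 0 ≤ r) (hh : 0 < h) :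
    Summable fun d : ℕ => g d * powCutoff r (h * (d + 1)) :=
  summable_of_ne_finset_zero fun _ hd => by rw [powCutoff_mul_succ_eq_zero hr hh hd, mul_zero]

lemma tsum_mul_powCutoff (g : ℕ → ℝ) {r h : ℝ} (hr : 0 ≤ r) (hh : 0 < h) :
    ∑' d : ℕ, g d * powCutoff r (h * (d + 1))
      = ∑ d ∈ range ⌊h⁻¹⌋₊, g d * powCutoff r (h * (d + 1)) :=
  tsum_eq_sum fun _ hd => by rw [powCutoff_mul_succ_eq_zero hr hh hd, mul_zero]

section PowerSums

variable {q : ℝ}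

lemma div_le_sum_range_succ_rpow (hq : 0 ≤ q) (n : ℕ) :
    (n : ℝ) ^ (q + 1) / (q + 1) ≤ ∑ i ∈ range n, ((i : ℝ) + 1) ^ q := by
  have hmono : MonotoneOn (fun x : ℝ => x ^ q) (Set.Icc 0 (0 + n)) :=
    fun x hx y _ hxy => Real.rpow_le_rpow hx.1 hxy hq
  have h := hmono.integral_le_sum
  rw [integral_rpow (Or.inl (by linarith)), Real.zero_rpow (by positivity)] at h
  simpa using h

lemma sum_range_succ_rpow_le (hq : 0 ≤ q) (n : ℕ) :
    ∑ i ∈ range n, ((i : ℝ) + 1) ^ q ≤ ((n : ℝ) + 1) ^ (q + 1) / (q + 1) := by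
  have hmono : MonotoneOn (fun x : ℝ => x ^ q) (Set.Icc 1 (1 + n)) :=
    fun x hx y _ hxy => Real.rpow_le_rpow (zero_le_one.trans hx.1) hxy hq
  have h := hmono.sum_le_integral
  rw [integral_rpow (Or.inl (by linarith)), Real.one_rpow] at h
  calc ∑ i ∈ range n, ((i : ℝ) + 1) ^ q = ∑ i ∈ range n, (1 + (i : ℝ)) ^ q := by
        simp only [add_comm]
    _ ≤ ((1 + n) ^ (q + 1) - 1) / (q + 1) := h
    _ ≤ ((n : ℝ) + 1) ^ (q + 1) / (q + 1) := by
        rw [add_comm (1 : ℝ)]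
        gcongr
        linarith

def powRiemannSum (q h : ℝ) : ℝ := h * ∑ d ∈ range ⌊h⁻¹⌋₊, (h * (d + 1)) ^ q

lemma powRiemannSum_nonneg {h : ℝ} (hh : 0 ≤ h) : 0 ≤ powRiemannSum q h :=
  mul_nonneg hh (sum_nonneg fun _ _ => by positivity)

lemma powRiemannSum_eq {h : ℝ} (hh : 0 < h) :
    powRiemannSum q h = h ^ (q + 1) * ∑ d ∈ range ⌊h⁻¹⌋₊, ((d : ℝ) + 1) ^ q := by
  have hterm (d : ℕ) : (h * (d + 1)) ^ q = h ^ q * ((d : ℝ) + 1) ^ q :=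
    Real.mul_rpow hh.le (by positivity)
  rw [powRiemannSum, sum_congr rfl fun d _ => hterm d, ← mul_sum, Real.rpow_add_one hh.ne']
  ring

lemma powRiemannSum_le_one (hq : 0 ≤ q) {h : ℝ} (hh : 0 < h) : powRiemannSum q h ≤ 1 := by
  have hterm : ∀ d ∈ range ⌊h⁻¹⌋₊, (h * (d + 1)) ^ q ≤ 1 := fun d hd =>
    Real.rpow_le_one (by positivity) ((mul_succ_le_one_iff hh d).2 (mem_range.1 hd)) hq
  calc powRiemannSum q h ≤ h * ⌊h⁻¹⌋₊ := by
        rw [powRiemannSum]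
        gcongr
        simpa using sum_le_card_nsmul _ _ _ hterm
    _ ≤ h * h⁻¹ := by gcongr; exact Nat.floor_le (by positivity)
    _ = 1 := mul_inv_cancel₀ hh.ne'

lemma powRiemannSum_eq_zero {h : ℝ} (hh : 1 < h) : powRiemannSum q h = 0 := by
  rw [powRiemannSum, Nat.floor_eq_zero.2 (inv_lt_one_of_one_lt₀ hh), range_zero, sum_empty,
    mul_zero]

lemma tendsto_mul_floor_inv :
    Tendsto (fun h : ℝ => h * ⌊h⁻¹⌋₊) (𝓝[>] 0) (𝓝 1) :=
  (tendsto_nat_floor_div_atTop.comp tendsto_inv_nhdsGT_zero).congr fun h => by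
    simp [div_inv_eq_mul, mul_comm]

theorem tendsto_powRiemannSum (hq : 0 ≤ q) :
    Tendsto (powRiemannSum q) (𝓝[>] 0) (𝓝 (1 / (q + 1))) := by
  have hcont : Tendsto (fun x : ℝ => x ^ (q + 1) / (q + 1)) (𝓝 1) (𝓝 (1 / (q + 1))) := by
    simpa using ((Real.continuousAt_rpow_const 1 (q + 1) (Or.inl one_ne_zero)).div_const
      (q + 1)).tendsto
  have hzero : Tendsto (fun h : ℝ => h) (𝓝[>] 0) (𝓝 0) := nhdsWithin_le_nhds
  have hlower := hcont.comp tendsto_mul_floor_inv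
  have hupper := hcont.comp (by simpa [mul_add] using tendsto_mul_floor_inv.add hzero :
    Tendsto (fun h : ℝ => h * (⌊h⁻¹⌋₊ + 1)) (𝓝[>] 0) (𝓝 1))
  refine tendsto_of_tendsto_of_tendsto_of_le_of_le' hlower hupper ?_ ?_ <;>
    filter_upwards [self_mem_nhdsWithin] with h (hh : 0 < h) <;>
    rw [Function.comp_apply, powRiemannSum_eq hh, Real.mul_rpow hh.le (by positivity),
      mul_div_assoc]
  · gcongr; exact div_le_sum_range_succ_rpow hq _
  · gcongr; exact sum_range_succ_rpow_le hq _

end PowerSums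

def powCutoffSum (q r h : ℝ) : ℝ := h * ∑' d : ℕ, (h * (d + 1)) ^ q * powCutoff r (h * (d + 1))

section PowCutoffSum

variable {q r h : ℝ}

lemma powCutoffSum_nonneg (hh : 0 ≤ h) : 0 ≤ powCutoffSum q r h :=
  mul_nonneg hh (tsum_nonneg fun _ => mul_nonneg (by positivity) (powCutoff_nonneg _ _))

lemma powCutoffSum_eq (hr : 0 ≤ r) (hh : 0 < h) :
    powCutoffSum q r h = powRiemannSum q h - powRiemannSum (q + r) h := by
  rw [powCutoffSum, tsum_mul_powCutoff _ hr hh, powRiemannSum, powRiemannSum, ← mul_sub,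
    ← sum_sub_distrib]
  congr 1
  refine sum_congr rfl fun d hd => ?_
  have hx : 0 < h * (d + 1) := by positivity
  rw [powCutoff_eq hr hx.le ((mul_succ_le_one_iff hh d).2 (mem_range.1 hd)), Real.rpow_add hx]
  ring

lemma powCutoffSum_le_one (hq : 0 ≤ q) (hr : 0 ≤ r) (hh : 0 < h) : powCutoffSum q r h ≤ 1 := by
  rw [powCutoffSum_eq hr hh]
  linarith [powRiemannSum_le_one hq hh, powRiemannSum_nonneg (q := q + r) hh.le]

lemma mul_powCutoffSum_le_one (hq : 0 ≤ q) (hr : 0 ≤ r) (hh : 0 < h) :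
    h * powCutoffSum q r h ≤ 1 := by
  rcases le_or_gt h 1 with h1 | h1
  · exact mul_le_one₀ h1 (powCutoffSum_nonneg hh.le) (powCutoffSum_le_one hq hr hh)
  · rw [powCutoffSum_eq hr hh, powRiemannSum_eq_zero h1, powRiemannSum_eq_zero h1]
    norm_num

theorem tendsto_powCutoffSum (hq : 0 ≤ q) (hr : 0 ≤ r) :
    Tendsto (powCutoffSum q r) (𝓝[>] 0) (𝓝 (1 / (q + 1) - 1 / (q + r + 1))) :=
  ((tendsto_powRiemannSum hq).sub (tendsto_powRiemannSum (add_nonneg hq hr))).congr'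
    (eventually_nhdsWithin_of_forall fun _ hh => (powCutoffSum_eq hr hh).symm)

end PowCutoffSum

lemma summable_one_div_succ_pow {k : ℕ} (hk : 1 < k) :
    Summable fun j : ℕ => 1 / ((j : ℝ) + 1) ^ k :=
  ((summable_nat_add_iff 1).2 (Real.summable_one_div_nat_pow.2 hk)).congr fun j => by push_cast; rfl

lemma tendsto_rpow_nhdsGT_zero {y : ℝ} (hy : 0 < y) :
    Tendsto (fun x : ℝ => x ^ y) (𝓝[>] 0) (𝓝[>] 0) := by
  have hcont := (Real.continuousAt_rpow_const 0 y (Or.inr hy.le)).tendsto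
  rw [Real.zero_rpow hy.ne'] at hcont
  exact tendsto_nhdsWithin_of_tendsto_nhds_of_eventually_within _
    (hcont.mono_left nhdsWithin_le_nhds)
    (eventually_nhdsWithin_of_forall fun x (hx : 0 < x) => Real.rpow_pos_of_pos hx y)

lemma tendsto_mul_const_nhdsGT_zero {c : ℝ} (hc : 0 < c) :
    Tendsto (fun s : ℝ => s * c) (𝓝[>] 0) (𝓝[>] 0) :=
  tendsto_nhdsWithin_of_tendsto_nhds_of_eventually_within _
    (((continuous_mul_const c).tendsto' 0 0 (zero_mul c)).mono_left nhdsWithin_le_nhds)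
    (eventually_nhdsWithin_of_forall fun s (hs : 0 < s) => mul_pos hs hc)

def cutoffWeight (r s : ℝ) (j l : ℕ) : ℝ :=
  (s * (j + 1) * (l + 1)) ^ r * powCutoff r (s * (j + 1) * (l + 1))

def scaledJ2 (r s : ℝ) : ℝ :=
  s ^ 3 * ∑' ν : ℕ × ℕ, ((ν.1 : ℝ) + ν.2 + 1) ^ 2 * cutoffWeight r s ν.1 ν.2

section Weight

variable {r s : ℝ}

lemma cutoffWeight_nonneg (hs : 0 ≤ s) (j l : ℕ) : 0 ≤ cutoffWeight r s j l :=
  mul_nonneg (by positivity) (powCutoff_nonneg _ _)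

lemma cutoffWeight_comm (r s : ℝ) (j l : ℕ) : cutoffWeight r s l j = cutoffWeight r s j l := by
  rw [cutoffWeight, cutoffWeight, mul_right_comm s]

lemma cutoffWeight_eq_zero (hr : 0 ≤ r) (hs : 0 < s) {j : ℕ} (hj : ⌊s⁻¹⌋₊ ≤ j) (l : ℕ) :
    cutoffWeight r s j l = 0 := by
  have h1 : 1 < s * (j + 1) := not_le.1 fun h => (mul_succ_le_one_iff hs j).1 h |>.not_ge hj
  have h2 : s * (j + 1) ≤ s * (j + 1) * (l + 1) :=
    le_mul_of_one_le_right (by positivity) (by simp)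
  rw [cutoffWeight, powCutoff_eq_zero hr (h1.le.trans h2), mul_zero]

lemma summable_mul_cutoffWeight (g : ℕ → ℕ → ℝ) (hr : 0 ≤ r) (hs : 0 < s) :
    Summable fun ν : ℕ × ℕ => g ν.1 ν.2 * cutoffWeight r s ν.1 ν.2 := by
  refine summable_of_ne_finset_zero (s := range ⌊s⁻¹⌋₊ ×ˢ range ⌊s⁻¹⌋₊) fun ν hν => ?_
  rw [mem_product, mem_range, mem_range, not_and_or, not_lt, not_lt] at hν
  rcases hν with hj | hl
  · rw [cutoffWeight_eq_zero hr hs hj, mul_zero]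
  · rw [← cutoffWeight_comm, cutoffWeight_eq_zero hr hs hl, mul_zero]

lemma tsum_prod_mul_cutoffWeight (g : ℕ → ℕ → ℝ) (hr : 0 ≤ r) (hs : 0 < s) :
    ∑' ν : ℕ × ℕ, g ν.1 ν.2 * cutoffWeight r s ν.1 ν.2
      = ∑' (j : ℕ) (l : ℕ), g j l * cutoffWeight r s j l :=
  (summable_mul_cutoffWeight g hr hs).tsum_prod' fun j =>
    (summable_mul_powCutoff (fun l => g j l * (s * (j + 1) * (l + 1)) ^ r) hr
      (by positivity : 0 < s * (j + 1))).congr fun l => by rw [cutoffWeight, mul_assoc]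

lemma tsum_sq_mul_cutoffWeight (hs : 0 < s) (j : ℕ) :
    s ^ 3 * ∑' l : ℕ, ((l : ℝ) + 1) ^ 2 * cutoffWeight r s j l
      = powCutoffSum (r + 2) r (s * (j + 1)) / ((j : ℝ) + 1) ^ 3 := by
  rw [powCutoffSum, div_eq_mul_inv, mul_right_comm, ← tsum_mul_left, ← tsum_mul_left]
  refine tsum_congr fun l => ?_
  have hx : 0 < s * (j + 1) * (l + 1) := by positivity
  rw [cutoffWeight, Real.rpow_add hx, Real.rpow_two]
  field_simp

lemma abs_tsum_mul_cutoffWeight_le (hr : 0 ≤ r) (hs : 0 < s) (j : ℕ) :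
    |s ^ 3 * ∑' l : ℕ, (2 * j * l - 1 : ℝ) * cutoffWeight r s j l|
      ≤ 2 * (s * (j + 1) * powCutoffSum (r + 1) r (s * (j + 1))) / ((j : ℝ) + 1) ^ 2 := by
  set h := s * ((j : ℝ) + 1) with hh
  have hpos : 0 < h := by positivity
  have hrhs : 2 * (h * powCutoffSum (r + 1) r h) / ((j : ℝ) + 1) ^ 2
      = 2 * h ^ 2 / ((j : ℝ) + 1) ^ 2
        * ∑' l : ℕ, (h * (l + 1)) ^ (r + 1) * powCutoff r (h * (l + 1)) := by
    rw [powCutoffSum]; ring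
  rw [← tsum_mul_left, ← Real.norm_eq_abs, hrhs]
  refine tsum_of_norm_bounded ((summable_mul_powCutoff _ hr hpos).hasSum.mul_left _) fun l => ?_
  have hx : 0 < h * (l + 1) := by positivity
  have hjl : |(2 * j * l - 1 : ℝ)| ≤ 2 * ((j : ℝ) + 1) * ((l : ℝ) + 1) :=
    abs_le.2 ⟨by nlinarith [j.cast_nonneg (α := ℝ), l.cast_nonneg (α := ℝ)],
      by nlinarith [j.cast_nonneg (α := ℝ), l.cast_nonneg (α := ℝ)]⟩
  rw [Real.norm_eq_abs, abs_mul, abs_mul, abs_of_nonneg (cutoffWeight_nonneg hs.le j l),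
    abs_of_pos (pow_pos hs 3)]
  calc s ^ 3 * (|(2 * j * l - 1 : ℝ)| * cutoffWeight r s j l)
      ≤ s ^ 3 * (2 * ((j : ℝ) + 1) * ((l : ℝ) + 1) * cutoffWeight r s j l) := by
        gcongr
        exact cutoffWeight_nonneg hs.le j l
    _ = _ := by
        rw [cutoffWeight, ← hh, Real.rpow_add_one hx.ne', hh]
        field_simp

lemma scaledJ2_eq (hr : 0 ≤ r) (hs : 0 < s) :
    scaledJ2 r s = 2 * ∑' j : ℕ, powCutoffSum (r + 2) r (s * (j + 1)) / ((j : ℝ) + 1) ^ 3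
      + ∑' j : ℕ, s ^ 3 * ∑' l : ℕ, (2 * j * l - 1 : ℝ) * cutoffWeight r s j l := by
  have hsplit (ν : ℕ × ℕ) : ((ν.1 : ℝ) + ν.2 + 1) ^ 2 * cutoffWeight r s ν.1 ν.2
      = ((ν.2 : ℝ) + 1) ^ 2 * cutoffWeight r s ν.1 ν.2
        + ((ν.1 : ℝ) + 1) ^ 2 * cutoffWeight r s ν.1 ν.2
        + (2 * ν.1 * ν.2 - 1 : ℝ) * cutoffWeight r s ν.1 ν.2 := by ring
  have hswap : ∑' ν : ℕ × ℕ, ((ν.1 : ℝ) + 1) ^ 2 * cutoffWeight r s ν.1 ν.2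
      = ∑' ν : ℕ × ℕ, ((ν.2 : ℝ) + 1) ^ 2 * cutoffWeight r s ν.1 ν.2 := by
    rw [← (Equiv.prodComm ℕ ℕ).tsum_eq]
    simp [cutoffWeight_comm]
  have hmain : s ^ 3 * ∑' (j : ℕ) (l : ℕ), ((l : ℝ) + 1) ^ 2 * cutoffWeight r s j l
      = ∑' j : ℕ, powCutoffSum (r + 2) r (s * (j + 1)) / ((j : ℝ) + 1) ^ 3 := by
    rw [← tsum_mul_left]
    exact tsum_congr (tsum_sq_mul_cutoffWeight hs)
  have hsum (g : ℕ → ℕ → ℝ) := summable_mul_cutoffWeight g hr hs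
  rw [scaledJ2, tsum_congr hsplit,
    ((hsum fun _ l => ((l : ℝ) + 1) ^ 2).add (hsum fun j _ => ((j : ℝ) + 1) ^ 2)).tsum_add
      (hsum fun j l => (2 * j * l - 1 : ℝ)),
    (hsum fun _ l => ((l : ℝ) + 1) ^ 2).tsum_add (hsum fun j _ => ((j : ℝ) + 1) ^ 2), hswap,
    tsum_prod_mul_cutoffWeight (fun _ l => ((l : ℝ) + 1) ^ 2) hr hs,
    tsum_prod_mul_cutoffWeight (fun j l => (2 * j * l - 1 : ℝ)) hr hs, ← hmain, tsum_mul_left]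
  ring

end Weight

section Limits

variable {q r : ℝ}

lemma tendsto_tsum_powCutoffSum_div (hq : 0 ≤ q) (hr : 0 ≤ r) :
    Tendsto (fun s : ℝ => ∑' j : ℕ, powCutoffSum q r (s * (j + 1)) / ((j : ℝ) + 1) ^ 3)
      (𝓝[>] 0) (𝓝 ((1 / (q + 1) - 1 / (q + r + 1)) * Bsum)) := by
  have h := tendsto_tsum_of_dominated_convergence
    (f := fun s (j : ℕ) => powCutoffSum q r (s * (j + 1)) / ((j : ℝ) + 1) ^ 3)
    (bound := fun j : ℕ => 1 / ((j : ℝ) + 1) ^ 3)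
    (summable_one_div_succ_pow (by norm_num))
    (fun j => ((tendsto_powCutoffSum hq hr).comp
      (tendsto_mul_const_nhdsGT_zero j.cast_add_one_pos)).div_const _)
    (eventually_nhdsWithin_of_forall fun s (hs : 0 < s) j => by
      have hh : 0 < s * ((j : ℝ) + 1) := by positivity
      rw [Real.norm_eq_abs, abs_of_nonneg (div_nonneg (powCutoffSum_nonneg hh.le) (by positivity))]
      exact div_le_div_of_nonneg_right (powCutoffSum_le_one hq hr hh) (by positivity))
  rwa [Bsum, ← tsum_mul_left, tsum_congr fun j => mul_one_div _ _]

lemma tendsto_tsum_remainder (hr : 0 ≤ r) :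
    Tendsto (fun s : ℝ => ∑' j : ℕ, s ^ 3 * ∑' l : ℕ, (2 * j * l - 1 : ℝ) * cutoffWeight r s j l)
      (𝓝[>] 0) (𝓝 0) := by
  have hid : Tendsto (fun h : ℝ => h) (𝓝[>] 0) (𝓝 0) := nhdsWithin_le_nhds
  have hψ : Tendsto (fun h => h * powCutoffSum (r + 1) r h) (𝓝[>] 0) (𝓝 0) := by
    simpa only [zero_mul] using hid.mul (tendsto_powCutoffSum (by linarith) hr)
  have hbound_lim (j : ℕ) : Tendsto (fun s : ℝ => 2 * (s * (j + 1) * powCutoffSum (r + 1) r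
      (s * (j + 1))) / ((j : ℝ) + 1) ^ 2) (𝓝[>] 0) (𝓝 0) := by
    simpa only [Function.comp_def, mul_zero, zero_div] using
      ((hψ.comp (tendsto_mul_const_nhdsGT_zero j.cast_add_one_pos)).const_mul 2).div_const
        (((j : ℝ) + 1) ^ 2)
  have h := tendsto_tsum_of_dominated_convergence (𝓕 := 𝓝[>] (0 : ℝ))
    (f := fun s (j : ℕ) => s ^ 3 * ∑' l : ℕ, (2 * j * l - 1 : ℝ) * cutoffWeight r s j l)
    (g := fun _ => 0) (bound := fun j : ℕ => 2 * (1 / ((j : ℝ) + 1) ^ 2))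
    ((summable_one_div_succ_pow (by norm_num)).mul_left 2)
    (fun j => squeeze_zero_norm'
      (eventually_nhdsWithin_of_forall fun s hs => abs_tsum_mul_cutoffWeight_le hr hs j)
      (hbound_lim j))
    (eventually_nhdsWithin_of_forall fun s (hs : 0 < s) j =>
      (abs_tsum_mul_cutoffWeight_le hr hs j).trans (by
        have := mul_powCutoffSum_le_one (q := r + 1) (by linarith) hr
          (by positivity : 0 < s * ((j : ℝ) + 1))
        rw [mul_one_div]
        gcongr
        linarith))
  rwa [tsum_zero] at h

theorem tendsto_scaledJ2 (hr : 0 ≤ r) :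
    Tendsto (scaledJ2 r) (𝓝[>] 0) (𝓝 (2 * ((1 / (r + 3) - 1 / (2 * r + 3)) * Bsum))) := by
  have h := ((tendsto_tsum_powCutoffSum_div (q := r + 2) (by linarith) hr).const_mul 2).add
    (tendsto_tsum_remainder hr)
  rw [add_zero, show r + 2 + 1 = r + 3 by ring, show r + 2 + r + 1 = 2 * r + 3 by ring] at h
  exact h.congr' (eventually_nhdsWithin_of_forall fun s hs => (scaledJ2_eq hr hs).symm)

end Limits

lemma rpow_mul_J2fun {p A : ℝ} (hp : 0 < p) (hA : 0 < A) :
    A ^ (3 / (2 * p)) * J2fun p A = scaledJ2 (2 * p) (A ^ (1 / (2 * p))) := by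
  set s := A ^ (1 / (2 * p))
  have hs3 : s ^ 3 = A ^ (3 / (2 * p)) := by
    rw [← Real.rpow_natCast, ← Real.rpow_mul hA.le]
    ring_nf
  have hsA : s ^ (2 * p) = A := by
    rw [← Real.rpow_mul hA.le, one_div_mul_cancel (by positivity), Real.rpow_one]
  rw [J2fun, scaledJ2, hs3, ← tsum_mul_left]
  congr 1
  refine tsum_congr fun ν => ?_
  have huv : 0 ≤ ((ν.1 : ℝ) + 1) * ((ν.2 : ℝ) + 1) := by positivity
  have ha : A * aT p ν ^ 2 = (s * (ν.1 + 1) * (ν.2 + 1)) ^ (2 * p) := by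
    rw [aT, ← Real.rpow_natCast, ← Real.rpow_mul huv, mul_assoc,
      Real.mul_rpow (by positivity) huv, hsA]
    ring_nf
  have hσ : sigT ν ^ 4 = ((ν.1 : ℝ) + ν.2 + 1) ^ 2 := by
    rw [sigT, ← Real.rpow_natCast, ← Real.rpow_mul (by positivity)]
    norm_num
  rw [cutoffWeight, powCutoff, ← ha, hσ]
  ring

/-- For every `p > 0`, `J₂(A) ~ (4Bp/((4p+3)(2p+3))) A^{−3/(2p)}` as `A → 0⁺`. -/
theorem J2fun_asymptotics (p : ℝ) (hp : 0 < p) :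
    Tendsto (fun A : ℝ => A ^ (3 / (2 * p)) * J2fun p A) (𝓝[>] (0 : ℝ))
      (𝓝 (4 * Bsum * p / ((4 * p + 3) * (2 * p + 3)))) := by
  have h := (tendsto_scaledJ2 (by positivity : (0 : ℝ) ≤ 2 * p)).comp
    (tendsto_rpow_nhdsGT_zero (by positivity : 0 < 1 / (2 * p)))
  rw [show 2 * ((1 / (2 * p + 3) - 1 / (2 * (2 * p) + 3)) * Bsum)
      = 4 * Bsum * p / ((4 * p + 3) * (2 * p + 3)) by field_simp; ring] at h
  exact h.congr' (eventually_nhdsWithin_of_forall fun A hA => (rpow_mul_J2fun hp hA).symm)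

end
end

section
/- Let a_ν ≥ 0 and σ_ν > 0 (ν ∈ Γ) be arbitrary sequences, r > 0, and suppose z₀ > 0 and A > 0 are such that the sequence η̃ defined by η̃_ν² = z₀² σ_ν² (1 − A a_ν²)₊ satisfies Σ_ν σ_ν² η̃_ν² = r² and Σ_ν a_ν² σ_ν² η̃_ν² = 1 (all sums finite). Then η̃ ∈ Θ(r), and η̃ minimizes Σ_ν η_ν⁴ over Θ(r): for every η ∈ Θ(r), Σ_ν η_ν⁴ ≥ Σ_ν η̃_ν⁴ = z₀⁴ Σ_ν σ_ν⁴ (1 − A a_ν²)₊² = z₀⁴ J₀(A). -/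
/-!
With `m_ν = (1 − A a_ν²)₊` and `w_ν = z₀² σ_ν²` we have `η̃_ν² = w_ν m_ν`, and since
`m_ν² = m_ν (1 − A a_ν²)` the convexity bound `η⁴ ≥ η̃⁴ + 2 η̃² (η² − η̃²)` improves to
`η_ν⁴ ≥ η̃_ν⁴ + 2 z₀² [(σ_ν² η_ν² − σ_ν² η̃_ν²) − A (a_ν² σ_ν² η_ν² − a_ν² σ_ν² η̃_ν²)]`.
Summing, the bracket becomes `(Σ σ²η² − r²) − A (Σ a²σ²η² − 1) ≥ 0` for `η ∈ Θ(r)`: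
`A` acts as a Lagrange multiplier for the constraint that `η̃` saturates.
-/

open Filter Topology

noncomputable section

/-- The constraint set `Θ(r) = {η ∈ l²(Γ) : Σ a²σ²η² ≤ 1, Σ σ²η² ≥ r²}`. -/
def Theta (a σ : Idx → ℝ) (r : ℝ) : Set (Idx → ℝ) :=
  {η | Summable (fun ν => η ν ^ 2) ∧
       Summable (fun ν => a ν ^ 2 * σ ν ^ 2 * η ν ^ 2) ∧
       (∑' ν, a ν ^ 2 * σ ν ^ 2 * η ν ^ 2) ≤ 1 ∧
       Summable (fun ν => σ ν ^ 2 * η ν ^ 2) ∧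
       r ^ 2 ≤ ∑' ν, σ ν ^ 2 * η ν ^ 2}

theorem Summable.sq_of_nonneg {ι : Type*} {f : ι → ℝ} (hf : Summable f) (hf0 : 0 ≤ f) :
    Summable fun i => f i ^ 2 :=
  (hf.mul_left (∑' j, f j)).of_nonneg_of_le (fun i => sq_nonneg _) fun i => by
    rw [sq]
    exact mul_le_mul_of_nonneg_right (hf.le_tsum i fun j _ => hf0 j) (hf0 i)

theorem Summable.pow_four_of_sq {ι : Type*} {f : ι → ℝ} (hf : Summable fun i => f i ^ 2) :
    Summable fun i => f i ^ 4 := by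
  simpa only [← pow_mul] using hf.sq_of_nonneg fun i => sq_nonneg (f i)

theorem max_zero_sq_eq_mul (c : ℝ) : max c 0 ^ 2 = max c 0 * c := by
  rcases le_total c 0 with hc | hc
  · simp [max_eq_right hc]
  · rw [max_eq_left hc, sq]

theorem pow_four_add_le_of_sq_eq_mul_max {t x w c : ℝ} (hw : 0 ≤ w) (ht : t ^ 2 = w * max c 0) :
    t ^ 4 + 2 * (w * c) * (x ^ 2 - t ^ 2) ≤ x ^ 4 := by
  have hcross : w * c * x ^ 2 ≤ t ^ 2 * x ^ 2 := by
    rw [ht, mul_assoc, mul_assoc]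
    exact mul_le_mul_of_nonneg_left (mul_le_mul_of_nonneg_right (le_max_left c 0) (sq_nonneg x)) hw
  have hdiag : t ^ 4 = w * c * t ^ 2 := by
    rw [show t ^ 4 = (t ^ 2) ^ 2 by ring, ht, mul_pow, max_zero_sq_eq_mul]
    ring
  nlinarith [sq_nonneg (x ^ 2 - t ^ 2)]

theorem extreme_sequence_minimizes_general
    (a σ : Idx → ℝ)
    (r z₀ A : ℝ) (hA : 0 < A)
    (ηt : Idx → ℝ)
    (hηt : ∀ ν, ηt ν = z₀ * σ ν * Real.sqrt (max (1 - A * a ν ^ 2) 0))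
    (hsum0 : Summable (fun ν => ηt ν ^ 2))
    (hsum4 : Summable (fun ν => ηt ν ^ 4))
    (hsum1 : Summable (fun ν => σ ν ^ 2 * ηt ν ^ 2))
    (hsum2 : Summable (fun ν => a ν ^ 2 * σ ν ^ 2 * ηt ν ^ 2))
    (heq1 : (∑' ν, σ ν ^ 2 * ηt ν ^ 2) = r ^ 2)
    (heq2 : (∑' ν, a ν ^ 2 * σ ν ^ 2 * ηt ν ^ 2) = 1) :
    ηt ∈ Theta a σ r ∧
    (∀ η ∈ Theta a σ r, (∑' ν, ηt ν ^ 4) ≤ ∑' ν, η ν ^ 4) ∧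
    (∑' ν, ηt ν ^ 4) = z₀ ^ 4 * ∑' ν, σ ν ^ 4 * (max (1 - A * a ν ^ 2) 0) ^ 2 := by
  have hηt_sq ν : ηt ν ^ 2 = z₀ ^ 2 * σ ν ^ 2 * max (1 - A * a ν ^ 2) 0 := by
    rw [hηt ν, mul_pow, mul_pow, Real.sq_sqrt (le_max_right _ _)]
  refine ⟨⟨hsum0, hsum2, heq2.le, hsum1, heq1.ge⟩, fun η ⟨hη, hηa, hηa_le, hησ, hησ_ge⟩ => ?_, ?_⟩
  · have hlagrange := hsum4.hasSum.add (((hησ.hasSum.sub hsum1.hasSum).sub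
      ((hηa.hasSum.sub hsum2.hasSum).mul_left A)).mul_left (2 * z₀ ^ 2))
    rw [heq1, heq2] at hlagrange
    have hpointwise ν := pow_four_add_le_of_sq_eq_mul_max (x := η ν)
      (sq_nonneg (z₀ * σ ν)) ((hηt_sq ν).trans (by rw [mul_pow]))
    have hslack : 0 ≤ 2 * z₀ ^ 2 * ((∑' ν, σ ν ^ 2 * η ν ^ 2) - r ^ 2 -
        A * ((∑' ν, a ν ^ 2 * σ ν ^ 2 * η ν ^ 2) - 1)) :=
      mul_nonneg (by positivity) (by nlinarith)
    linarith [hasSum_le (fun ν => by linarith [hpointwise ν]) hlagrange hη.pow_four_of_sq.hasSum]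
  · calc (∑' ν, ηt ν ^ 4)
        = ∑' ν, z₀ ^ 4 * (σ ν ^ 4 * max (1 - A * a ν ^ 2) 0 ^ 2) :=
          tsum_congr fun ν => by rw [show ηt ν ^ 4 = (ηt ν ^ 2) ^ 2 by ring, hηt_sq]; ring
      _ = _ := tsum_mul_left

/-- If `η̃_ν² = z₀² σ_ν² (1 − A a_ν²)₊` satisfies the two constraints with equality
(`Σ σ²η̃² = r²` and `Σ a²σ²η̃² = 1`, all sums finite), then `η̃ ∈ Θ(r)` and `η̃` minimizes
`Σ η⁴` over `Θ(r)`, with minimal value `z₀⁴ Σ σ⁴(1 − A a²)₊² = z₀⁴ J₀(A)`. -/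
theorem extreme_sequence_minimizes
    (a σ : Idx → ℝ) (ha : ∀ ν, 0 ≤ a ν) (hσ : ∀ ν, 0 < σ ν)
    (r z₀ A : ℝ) (hr : 0 < r) (hz : 0 < z₀) (hA : 0 < A)
    (ηt : Idx → ℝ)
    (hηt : ∀ ν, ηt ν = z₀ * σ ν * Real.sqrt (max (1 - A * a ν ^ 2) 0))
    (hsum0 : Summable (fun ν => ηt ν ^ 2))
    (hsum4 : Summable (fun ν => ηt ν ^ 4))
    (hsum1 : Summable (fun ν => σ ν ^ 2 * ηt ν ^ 2))
    (hsum2 : Summable (fun ν => a ν ^ 2 * σ ν ^ 2 * ηt ν ^ 2))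
    (heq1 : (∑' ν, σ ν ^ 2 * ηt ν ^ 2) = r ^ 2)
    (heq2 : (∑' ν, a ν ^ 2 * σ ν ^ 2 * ηt ν ^ 2) = 1) :
    ηt ∈ Theta a σ r ∧
    (∀ η ∈ Theta a σ r, (∑' ν, ηt ν ^ 4) ≤ ∑' ν, η ν ^ 4) ∧
    (∑' ν, ηt ν ^ 4) = z₀ ^ 4 * ∑' ν, σ ν ^ 4 * (max (1 - A * a ν ^ 2) 0) ^ 2 :=
  extreme_sequence_minimizes_general a σ r z₀ A hA ηt hηt hsum0 hsum4 hsum1 hsum2 heq1 heq2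
end
end

section
/- Let Δ be a finite index set, let (ξ_ν)_{ν∈Δ} be i.i.d. standard Gaussian random variables, let θ_ν ∈ ℝ (ν ∈ Δ) and ε > 0. Define the likelihood ratio L = Π_{ν∈Δ} cosh(θ_ν ξ_ν / ε) · exp(−θ_ν²/(2ε²)) (this is dP_π/dP_{ε,0} for the prior π placing mass 1/2 at each of ±θ_ν independently in each coordinate). Then E[L²] = Π_{ν∈Δ} cosh(θ_ν²/ε²) ≤ exp(2 Σ_{ν∈Δ} sinh²(θ_ν²/(2ε²))). -/
/-!
The likelihood ratio is a product of functions of independent coordinates, so by Fubini its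
second moment factors into one-dimensional Gaussian integrals. In each coordinate,
`cosh² y = (cosh 2y + 1) / 2` and the Gaussian moment generating function give
`E[cosh² (a ξ)] = (exp (2a²) + 1) / 2`, which the normalising factor `exp (-a²)` turns into
`cosh a²`. The bound is `cosh 2x = 1 + 2 sinh² x ≤ exp (2 sinh² x)`, multiplied over
coordinates.
-/

open MeasureTheory ProbabilityTheory Real
open scoped NNReal

namespace ProbabilityTheory

lemma integral_exp_mul_gaussianReal (μ : ℝ) (v : ℝ≥0) (t : ℝ) :
    ∫ x, exp (t * x) ∂gaussianReal μ v = exp (μ * t + v * t ^ 2 / 2) :=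
  congrFun (mgf_fun_id_gaussianReal (μ := μ) (v := v)) t

lemma integrable_cosh_mul_gaussianReal (μ : ℝ) (v : ℝ≥0) (t : ℝ) :
    Integrable (fun x ↦ cosh (t * x)) (gaussianReal μ v) := by
  simp_rw [cosh_eq, ← neg_mul]
  exact ((integrable_exp_mul_gaussianReal t).add
    (integrable_exp_mul_gaussianReal (-t))).div_const 2

lemma integral_cosh_mul_gaussianReal (v : ℝ≥0) (t : ℝ) :
    ∫ x, cosh (t * x) ∂gaussianReal 0 v = exp (v * t ^ 2 / 2) := by
  simp_rw [cosh_eq, ← neg_mul]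
  rw [integral_div, integral_add (integrable_exp_mul_gaussianReal t)
    (integrable_exp_mul_gaussianReal (-t)), integral_exp_mul_gaussianReal,
    integral_exp_mul_gaussianReal]
  ring_nf

lemma integral_cosh_mul_sq_gaussianReal (v : ℝ≥0) (t : ℝ) :
    ∫ x, cosh (t * x) ^ 2 ∂gaussianReal 0 v = (exp (2 * v * t ^ 2) + 1) / 2 := by
  have cosh_sq_eq (y : ℝ) : cosh y ^ 2 = (cosh (2 * y) + 1) / 2 := by
    rw [cosh_two_mul, cosh_sq]; ring
  simp_rw [cosh_sq_eq, ← mul_assoc]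
  rw [integral_div, integral_add (integrable_cosh_mul_gaussianReal 0 v _) (integrable_const 1),
    integral_cosh_mul_gaussianReal, integral_const, probReal_univ, smul_eq_mul, mul_one]
  ring_nf

lemma integral_sq_cosh_mul_div_mul_exp_gaussianReal (θ ε : ℝ) :
    ∫ x, (cosh (θ * x / ε) * exp (-(θ ^ 2) / (2 * ε ^ 2))) ^ 2 ∂gaussianReal 0 1 =
      cosh (θ ^ 2 / ε ^ 2) := by
  simp_rw [mul_pow, mul_div_right_comm θ]
  rw [integral_mul_const, integral_cosh_mul_sq_gaussianReal, ← exp_nat_mul, cosh_eq, div_pow,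
    NNReal.coe_one]
  field_simp
  rw [add_mul, ← exp_add, one_mul]
  ring_nf

end ProbabilityTheory

lemma Real.cosh_two_mul_le_exp (x : ℝ) : cosh (2 * x) ≤ exp (2 * sinh x ^ 2) := by
  rw [cosh_two_mul, cosh_sq]
  linarith [add_one_le_exp (2 * sinh x ^ 2)]

theorem likelihood_ratio_second_moment_general
    {Δ : Type*} [Fintype Δ] (θ : Δ → ℝ) (ε : ℝ) :
    (∫ ξ : Δ → ℝ,
        (∏ ν, Real.cosh (θ ν * ξ ν / ε) * Real.exp (-(θ ν ^ 2) / (2 * ε ^ 2))) ^ 2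
        ∂(Measure.pi fun _ : Δ => gaussianReal 0 1)) =
      ∏ ν, Real.cosh (θ ν ^ 2 / ε ^ 2) ∧
    (∏ ν, Real.cosh (θ ν ^ 2 / ε ^ 2)) ≤
      Real.exp (2 * ∑ ν, Real.sinh (θ ν ^ 2 / (2 * ε ^ 2)) ^ 2) := by
  refine ⟨?_, ?_⟩
  · simp_rw [← Finset.prod_pow]
    rw [integral_fintype_prod_eq_prod
      (fun ν x ↦ (cosh (θ ν * x / ε) * exp (-(θ ν ^ 2) / (2 * ε ^ 2))) ^ 2)]
    simp_rw [integral_sq_cosh_mul_div_mul_exp_gaussianReal]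
  · rw [Finset.mul_sum, exp_sum]
    refine Finset.prod_le_prod (fun ν _ ↦ (cosh_pos _).le) fun ν _ ↦ ?_
    rw [show θ ν ^ 2 / ε ^ 2 = 2 * (θ ν ^ 2 / (2 * ε ^ 2)) by ring]
    exact cosh_two_mul_le_exp _

/-- For i.i.d. standard Gaussians `ξ_ν` (ν in a finite set Δ), the likelihood ratio
`L = Π_ν cosh(θ_ν ξ_ν/ε) exp(−θ_ν²/(2ε²))` satisfies
`E[L²] = Π_ν cosh(θ_ν²/ε²) ≤ exp(2 Σ_ν sinh²(θ_ν²/(2ε²)))`. -/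
theorem likelihood_ratio_second_moment
    {Δ : Type*} [Fintype Δ] (θ : Δ → ℝ) (ε : ℝ) (hε : 0 < ε) :
    (∫ ξ : Δ → ℝ,
        (∏ ν, Real.cosh (θ ν * ξ ν / ε) * Real.exp (-(θ ν ^ 2) / (2 * ε ^ 2))) ^ 2
        ∂(Measure.pi fun _ : Δ => gaussianReal 0 1)) =
      ∏ ν, Real.cosh (θ ν ^ 2 / ε ^ 2) ∧
    (∏ ν, Real.cosh (θ ν ^ 2 / ε ^ 2)) ≤
      Real.exp (2 * ∑ ν, Real.sinh (θ ν ^ 2 / (2 * ε ^ 2)) ^ 2) :=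
  likelihood_ratio_second_moment_general θ ε
end
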